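/- Let G be a second-countable locally compact topological group with left Haar measure, let E be a reflexive complex Banach space (the canonical embedding E → E** is surjective), and let π : L¹(G) → B(E) be a bounded linear map. Let W be the unique bounded operator on L²(G, E) with ∫_G f(t)·μ((W(g•x))(t)) dt = μ(π(fg)(x)) for all f, g ∈ L²(G), x ∈ E, μ ∈ E*. Let W₂₃ be the unique bounded operator on L²(G×G, E) with W₂₃(g⊠H) = g⊠(W(H)) for all g ∈ L²(G), H ∈ L²(G, E); let χ be the isometric operator on L²(G×G, E) induced by the coordinate swap, (χH)(s, t) = H(t, s); and set W₁₃ = χ ∘ W₂₃ ∘ χ. Then π is multiplicative for convolution, i.e. π(a⋆b) = π(a) ∘ π(b) for all a, b ∈ L¹(G), if and only if for all f₁, f₂, g₁, g₂ ∈ L²(G), x ∈ E and μ ∈ E*: ∫_{G×G} f₁(s) f₂(t) · μ((W₁₃(W₂₃(g₁⊠(g₂•x))))(s, t)) d(s, t) = μ(π((f₁g₁)⋆(f₂g₂))(x)). -/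

import Mathlib

/-!
Write `H = W(g₂ • x)`. The assumption on `W₂₃` gives `W₂₃(g₁ ⊠ (g₂ • x)) = g₁ ⊠ H`, and undoing
the swap turns the left-hand side of the corepresentation identity into the pairing of
`W₂₃ χ (g₁ ⊠ H)` against `f₂ ⊠ f₁` and `φ`. This is continuous and linear in `H`; for `H = h • c`
the swap gives `h ⊠ (g₁ • c)`, on which `W₂₃` is again known, and the pairing equals
`(∫ f₂ h) φ(π(f₁g₁) c)`. Since such `H` include the simple functions, the pairing equals
`∫ f₂ φ(π(f₁g₁) H)` for every `H`, which by the defining property of `W` is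
`φ(π(f₁g₁) π(f₂g₂) x)`. So the identity says exactly that `π((f₁g₁) ⋆ (f₂g₂))` and
`π(f₁g₁) π(f₂g₂)` agree weakly; every `L¹` function is a product of two `L²` functions and `E*`
separates points, so this is multiplicativity of `π`.
-/

open MeasureTheory
open scoped ENNReal

namespace MeasureTheory

variable {α β 𝕜 E : Type*} [MeasurableSpace α] [MeasurableSpace β] {μ : Measure α}
  {ν : Measure β} [RCLike 𝕜] [NormedAddCommGroup E] [NormedSpace 𝕜 E]

section SmulProd

variable [SFinite ν] {p : ℝ≥0∞} {g : α → 𝕜} {H : β → E}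

theorem eLpNorm_smul_prod (hp : p ≠ ∞) (hg : AEStronglyMeasurable g μ)
    (hH : AEStronglyMeasurable H ν) :
    eLpNorm (fun q : α × β => g q.1 • H q.2) p (μ.prod ν) = eLpNorm g p μ * eLpNorm H p ν := by
  rcases eq_or_ne p 0 with rfl | hp₀
  · simp
  simp only [eLpNorm_eq_lintegral_rpow_enorm_toReal hp₀ hp, enorm_smul]
  rw [← ENNReal.mul_rpow_of_nonneg _ _ (by positivity),
    ← lintegral_prod_mul (hg.enorm.pow_const _) (hH.enorm.pow_const _)]
  simp only [ENNReal.mul_rpow_of_nonneg _ _ ENNReal.toReal_nonneg]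

theorem MemLp.smul_prod (hp : p ≠ ∞) (hg : MemLp g p μ) (hH : MemLp H p ν) :
    MemLp (fun q : α × β => g q.1 • H q.2) p (μ.prod ν) :=
  ⟨hg.1.comp_fst.smul hH.1.comp_snd, by
    rw [eLpNorm_smul_prod hp hg.1 hH.1]
    exact ENNReal.mul_lt_top hg.2 hH.2⟩

end SmulProd

namespace L2

variable [SFinite ν]

/-- The elementary tensor `g ⊠ H`. -/
noncomputable def smulProd (g : Lp 𝕜 2 μ) (H : Lp E 2 ν) : Lp E 2 (μ.prod ν) :=
  ((Lp.memLp g).smul_prod ENNReal.ofNat_ne_top (Lp.memLp H)).toLp _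

theorem coeFn_smulProd (g : Lp 𝕜 2 μ) (H : Lp E 2 ν) :
    smulProd g H =ᵐ[μ.prod ν] fun q => g q.1 • H q.2 :=
  MemLp.coeFn_toLp _

theorem norm_smulProd (g : Lp 𝕜 2 μ) (H : Lp E 2 ν) : ‖smulProd g H‖ = ‖g‖ * ‖H‖ := by
  rw [smulProd, Lp.norm_toLp, eLpNorm_smul_prod ENNReal.ofNat_ne_top
    (Lp.aestronglyMeasurable g) (Lp.aestronglyMeasurable H), ENNReal.toReal_mul]
  rfl

noncomputable def smulProdL (g : Lp 𝕜 2 μ) : Lp E 2 ν →L[𝕜] Lp E 2 (μ.prod ν) :=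
  LinearMap.mkContinuous
    { toFun := smulProd g
      map_add' := fun H H' => by
        refine Lp.ext ?_
        filter_upwards [coeFn_smulProd g (H + H'), coeFn_smulProd g H, coeFn_smulProd g H',
          Lp.coeFn_add (smulProd g H) (smulProd g H'),
          Measure.quasiMeasurePreserving_snd.ae_eq_comp (Lp.coeFn_add H H')]
          with q h h₁ h₂ h₃ h₄
        simp only [Function.comp_apply] at h₄
        simp only [h, h₃, Pi.add_apply, h₁, h₂, h₄, smul_add]
      map_smul' := fun c H => by
        refine Lp.ext ?_
        filter_upwards [coeFn_smulProd g (c • H), coeFn_smulProd g H,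
          Lp.coeFn_smul c (smulProd g H),
          Measure.quasiMeasurePreserving_snd.ae_eq_comp (Lp.coeFn_smul c H)]
          with q h h₁ h₂ h₃
        simp only [Function.comp_apply] at h₃
        simp only [h, h₂, Pi.smul_apply, h₁, h₃, RingHom.id_apply, smul_comm c] }
    ‖g‖ fun H => (norm_smulProd g H).le

theorem smulProdL_apply (g : Lp 𝕜 2 μ) (H : Lp E 2 ν) : smulProdL g H = smulProd g H :=
  LinearMap.mkContinuous_apply _ _ _ _

noncomputable def mulPairing (f : Lp 𝕜 2 μ) (φ : StrongDual 𝕜 E) : Lp E 2 μ →L[𝕜] 𝕜 :=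
  (innerSL 𝕜 (star f)).comp (φ.compLpL 2 μ)

theorem mulPairing_apply (f : Lp 𝕜 2 μ) (φ : StrongDual 𝕜 E) (M : Lp E 2 μ) :
    mulPairing f φ M = ∫ a, f a * φ (M a) ∂μ := by
  rw [mulPairing, ContinuousLinearMap.comp_apply, innerSL_apply_apply, L2.inner_def]
  refine integral_congr_ae ?_
  filter_upwards [φ.coeFn_compLpL M, Lp.coeFn_star f] with a hM hf
  rw [hM, hf, RCLike.inner_apply, Pi.star_apply, RCLike.star_def, RCLike.conj_conj, mul_comm]

theorem mulPairing_smulProd_smulProd [SFinite μ] (f₂ h : Lp 𝕜 2 μ) (f₁ : Lp 𝕜 2 ν)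
    (φ : StrongDual 𝕜 E) (M : Lp E 2 ν) :
    mulPairing (smulProd f₂ f₁) φ (smulProd h M) = (∫ t, f₂ t * h t ∂μ) * mulPairing f₁ φ M := by
  rw [mulPairing_apply, mulPairing_apply, ← integral_prod_mul]
  refine integral_congr_ae ?_
  filter_upwards [coeFn_smulProd f₂ f₁, coeFn_smulProd h M] with q hf hM
  rw [hf, hM, map_smul, smul_eq_mul, smul_eq_mul]
  ring

theorem mulPairing_of_ae_eq_smul_const (f h : Lp 𝕜 2 μ) (φ : StrongDual 𝕜 E) {c : E}
    {F : Lp E 2 μ} (hF : F =ᵐ[μ] fun t => h t • c) :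
    mulPairing f φ F = (∫ t, f t * h t ∂μ) * φ c := by
  rw [mulPairing_apply, ← integral_mul_const]
  refine integral_congr_ae ?_
  filter_upwards [hF] with t ht
  rw [ht, map_smul, smul_eq_mul, mul_assoc]

end L2

theorem Lp.coeFn_toSpanSingleton_compLp {p : ℝ≥0∞} (g : Lp 𝕜 p μ) (c : E) :
    (ContinuousLinearMap.toSpanSingleton 𝕜 c).compLp g =ᵐ[μ] fun t => g t • c :=
  (ContinuousLinearMap.toSpanSingleton 𝕜 c).coeFn_compLp g

theorem Lp.ext_continuousLinearMap_indicatorConstLp {p : ℝ≥0∞} [Fact (1 ≤ p)] (hp : p ≠ ∞)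
    {F : Type*} [TopologicalSpace F] [AddCommMonoid F] [Module 𝕜 F] [T2Space F]
    {T S : Lp E p μ →L[𝕜] F}
    (h : ∀ (c : E) {s : Set α} (hs : MeasurableSet s) (hμs : μ s ≠ ∞),
      T (indicatorConstLp p hs hμs c) = S (indicatorConstLp p hs hμs c)) :
    T = S := by
  ext f
  induction f using Lp.induction hp with
  | indicatorConst c hs hμs => exact h c hs hμs.ne
  | add _ _ _ hf hg => rw [map_add, map_add, hf, hg]
  | isClosed => exact isClosed_eq T.continuous S.continuous

/-- The factors are `√‖a‖` and `a / √‖a‖`. -/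
theorem Lp.exists_mul_ae_eq_of_L1 (a : Lp 𝕜 1 μ) :
    ∃ f g : Lp 𝕜 2 μ, (fun t => f t * g t) =ᵐ[μ] a := by
  set r : α → ℝ := fun t => √‖a t‖
  have hr : MemLp r 2 μ := by
    simpa [r, Real.sqrt_eq_rpow, ENNReal.div_eq_inv_mul] using
      (Lp.memLp a).norm_rpow_div 2⁻¹
  have hf : MemLp (fun t => (r t : 𝕜)) 2 μ := hr.ofReal
  have hg : MemLp (fun t => a t / r t) 2 μ := by
    have hmeas := (Lp.aestronglyMeasurable a).aemeasurable.div hf.1.aemeasurable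
    refine hr.of_le hmeas.aestronglyMeasurable (ae_of_all _ fun t => ?_)
    rcases eq_or_ne (a t) 0 with h | h
    · simp [h, r]
    · rw [norm_div, RCLike.norm_ofReal, Real.norm_eq_abs, abs_of_nonneg (Real.sqrt_nonneg _),
        div_le_iff₀ (Real.sqrt_pos.2 (norm_pos_iff.2 h)), Real.mul_self_sqrt (norm_nonneg _)]
  refine ⟨hf.toLp _, hg.toLp _, ?_⟩
  filter_upwards [hf.coeFn_toLp, hg.coeFn_toLp] with t hft hgt
  rw [hft, hgt]
  rcases eq_or_ne (a t) 0 with h | h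
  · simp [h]
  · exact mul_div_cancel₀ _ (by simpa [r] using h)

end MeasureTheory

section Corepresentation

variable {G E : Type*} [MeasurableSpace G] {ν : Measure G} [NormedAddCommGroup E]
  [NormedSpace ℂ E]

def IsAssociatedOperator (π : Lp ℂ 1 ν →L[ℂ] (E →L[ℂ] E)) (W : Lp E 2 ν →L[ℂ] Lp E 2 ν) :
    Prop :=
  ∀ (f g : Lp ℂ 2 ν) (x : E) (φ : StrongDual ℂ E) (gx : Lp E 2 ν) (fg : Lp ℂ 1 ν),
    gx =ᵐ[ν] (fun t => g t • x) → fg =ᵐ[ν] (fun t => f t * g t) →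
    ∫ t, f t * φ (W gx t) ∂ν = φ (π fg x)

/-- `W₂₃ = 1 ⊗ W` on `L²(G × G, E)`. -/
def IsAmpliation (W : Lp E 2 ν →L[ℂ] Lp E 2 ν)
    (W23 : Lp E 2 (ν.prod ν) →L[ℂ] Lp E 2 (ν.prod ν)) : Prop :=
  ∀ (g : Lp ℂ 2 ν) (H : Lp E 2 ν) (K K' : Lp E 2 (ν.prod ν)),
    K =ᵐ[ν.prod ν] (fun q => g q.1 • H q.2) → K' =ᵐ[ν.prod ν] (fun q => g q.1 • (W H) q.2) →
    W23 K = K'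

def IsSwap (χ : Lp E 2 (ν.prod ν) →L[ℂ] Lp E 2 (ν.prod ν)) : Prop :=
  ∀ H : Lp E 2 (ν.prod ν), χ H =ᵐ[ν.prod ν] (fun q => H (q.2, q.1))

open ContinuousLinearMap L2

variable [SFinite ν] {π : Lp ℂ 1 ν →L[ℂ] (E →L[ℂ] E)} {W : Lp E 2 ν →L[ℂ] Lp E 2 ν}
  {W23 χ : Lp E 2 (ν.prod ν) →L[ℂ] Lp E 2 (ν.prod ν)}

theorem IsSwap.smulProd_of_ae_eq_smul_const (hχ : IsSwap χ) (g h : Lp ℂ 2 ν) {c : E}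
    {F gc : Lp E 2 ν} (hF : F =ᵐ[ν] fun t => h t • c) (hgc : gc =ᵐ[ν] fun t => g t • c) :
    χ (smulProd g F) =ᵐ[ν.prod ν] fun q => h q.1 • gc q.2 := by
  filter_upwards [hχ (smulProd g F),
    Measure.measurePreserving_swap.quasiMeasurePreserving.ae_eq_comp (coeFn_smulProd g F),
    Measure.quasiMeasurePreserving_fst.ae_eq_comp hF,
    Measure.quasiMeasurePreserving_snd.ae_eq_comp hgc] with q hχq hgF hFq hgcq
  simp only [Function.comp_apply, Prod.swap] at hgF hFq hgcq
  rw [hχq, hgF, hFq, hgcq, smul_comm]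

theorem IsSwap.integral_mul_eq_mulPairing (hχ : IsSwap χ) (f₁ f₂ : Lp ℂ 2 ν)
    (φ : StrongDual ℂ E) (M : Lp E 2 (ν.prod ν)) :
    ∫ q, f₁ q.1 * f₂ q.2 * φ (χ M q) ∂(ν.prod ν) = mulPairing (smulProd f₂ f₁) φ M :=
  calc ∫ q, f₁ q.1 * f₂ q.2 * φ (χ M q) ∂(ν.prod ν)
      _ = ∫ q, f₂ q.swap.1 * f₁ q.swap.2 * φ (M q.swap) ∂(ν.prod ν) := by
        refine integral_congr_ae ?_
        filter_upwards [hχ M] with q hq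
        rw [hq, mul_comm (f₁ _)]
        rfl
      _ = ∫ q, f₂ q.1 * f₁ q.2 * φ (M q) ∂(ν.prod ν) :=
        integral_prod_swap fun q => f₂ q.1 * f₁ q.2 * φ (M q)
      _ = mulPairing (smulProd f₂ f₁) φ M := by
        rw [mulPairing_apply]
        refine integral_congr_ae ?_
        filter_upwards [coeFn_smulProd f₂ f₁] with q hq
        rw [hq, smul_eq_mul]

/-- `χ (g₁ ⊠ F)` is an elementary tensor of the shape `W₂₃` is known on only when `F = h • c`;
the identity is checked on indicators and extended by continuity. -/
theorem mulPairing_comp_W23_swap_smulProdL (hW : IsAssociatedOperator π W)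
    (hW23 : IsAmpliation W W23) (hχ : IsSwap χ) (f₁ f₂ g₁ : Lp ℂ 2 ν) (φ : StrongDual ℂ E)
    {f₁g₁ : Lp ℂ 1 ν} (hf₁g₁ : f₁g₁ =ᵐ[ν] fun t => f₁ t * g₁ t) :
    (mulPairing (smulProd f₂ f₁) φ).comp (W23.comp (χ.comp (smulProdL g₁))) =
      mulPairing f₂ (φ.comp (π f₁g₁)) := by
  refine Lp.ext_continuousLinearMap_indicatorConstLp ENNReal.ofNat_ne_top
    fun c s hs hμs => ?_
  set h := indicatorConstLp 2 hs hμs (1 : ℂ)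
  have hF : indicatorConstLp 2 hs hμs c =ᵐ[ν] fun t => h t • c := by
    filter_upwards [indicatorConstLp_coeFn (p := 2) (hs := hs) (hμs := hμs) (c := c),
      indicatorConstLp_coeFn (p := 2) (hs := hs) (hμs := hμs) (c := (1 : ℂ))] with t hc h1
    rw [hc, h1, ← Set.indicator_smul_const_apply, one_smul]
  set gc := (toSpanSingleton ℂ c).compLp g₁
  have hgc := Lp.coeFn_toSpanSingleton_compLp g₁ c
  rw [comp_apply, comp_apply, comp_apply, smulProdL_apply,
    hW23 h gc _ _ (hχ.smulProd_of_ae_eq_smul_const g₁ h hF hgc) (coeFn_smulProd _ _),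
    mulPairing_smulProd_smulProd, mulPairing_of_ae_eq_smul_const _ _ _ hF, mulPairing_apply,
    hW f₁ g₁ c φ gc f₁g₁ hgc hf₁g₁, comp_apply]

theorem integral_mul_swap_W23_swap_W23 (hW : IsAssociatedOperator π W)
    (hW23 : IsAmpliation W W23) (hχ : IsSwap χ) (f₁ f₂ g₁ g₂ : Lp ℂ 2 ν) (x : E)
    (φ : StrongDual ℂ E) {g₂x : Lp E 2 ν} {K : Lp E 2 (ν.prod ν)} {f₁g₁ f₂g₂ : Lp ℂ 1 ν}
    (hg₂x : g₂x =ᵐ[ν] fun t => g₂ t • x) (hK : K =ᵐ[ν.prod ν] fun q => g₁ q.1 • g₂x q.2)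
    (hf₁g₁ : f₁g₁ =ᵐ[ν] fun t => f₁ t * g₁ t) (hf₂g₂ : f₂g₂ =ᵐ[ν] fun t => f₂ t * g₂ t) :
    ∫ q, f₁ q.1 * f₂ q.2 * φ (χ (W23 (χ (W23 K))) q) ∂(ν.prod ν) =
      φ (π f₁g₁ (π f₂g₂ x)) := by
  rw [hW23 g₁ g₂x K _ hK (coeFn_smulProd g₁ (W g₂x)), hχ.integral_mul_eq_mulPairing,
    ← smulProdL_apply g₁, ← comp_apply χ, ← comp_apply W23, ← comp_apply (mulPairing _ _),
    mulPairing_comp_W23_swap_smulProdL hW hW23 hχ f₁ f₂ g₁ φ hf₁g₁, mulPairing_apply]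
  exact hW f₂ g₂ x _ g₂x f₂g₂ hg₂x hf₂g₂

end Corepresentation

theorem pi_homomorphism_iff_corepresentation_general
    {G : Type*} [Group G] [TopologicalSpace G]
    [LocallyCompactSpace G] [SecondCountableTopology G]
    [MeasurableSpace G]
    (ν : Measure G) [ν.IsHaarMeasure]
    {E : Type*} [NormedAddCommGroup E] [NormedSpace ℂ E]
    (π : Lp ℂ 1 ν →L[ℂ] (E →L[ℂ] E))
    (W : Lp E 2 ν →L[ℂ] Lp E 2 ν)
    (hW : ∀ (f g : Lp ℂ 2 ν) (x : E) (φ : StrongDual ℂ E)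
        (gx : Lp E 2 ν) (fg : Lp ℂ 1 ν),
      gx =ᵐ[ν] (fun t => g t • x) → fg =ᵐ[ν] (fun t => f t * g t) →
      ∫ t, f t * φ (W gx t) ∂ν = φ (π fg x))
    (W23 : Lp E 2 (ν.prod ν) →L[ℂ] Lp E 2 (ν.prod ν))
    (hW23 : ∀ (g : Lp ℂ 2 ν) (H : Lp E 2 ν) (K K' : Lp E 2 (ν.prod ν)),
      K =ᵐ[ν.prod ν] (fun q => g q.1 • H q.2) →
      K' =ᵐ[ν.prod ν] (fun q => g q.1 • (W H) q.2) →
      W23 K = K')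
    (χ : Lp E 2 (ν.prod ν) →L[ℂ] Lp E 2 (ν.prod ν))
    (hχ : ∀ H : Lp E 2 (ν.prod ν), χ H =ᵐ[ν.prod ν] (fun q => H (q.2, q.1)))
    (W13 : Lp E 2 (ν.prod ν) →L[ℂ] Lp E 2 (ν.prod ν))
    (hW13 : W13 = χ.comp (W23.comp χ)) :
    (∀ a b ab : Lp ℂ 1 ν,
        ab =ᵐ[ν] (fun t => ∫ s, a s * b (s⁻¹ * t) ∂ν) →
        π ab = (π a).comp (π b)) ↔
    (∀ (f₁ f₂ g₁ g₂ : Lp ℂ 2 ν) (x : E) (φ : StrongDual ℂ E)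
        (g₂x : Lp E 2 ν) (K : Lp E 2 (ν.prod ν)) (f₁g₁ f₂g₂ c : Lp ℂ 1 ν),
      g₂x =ᵐ[ν] (fun t => g₂ t • x) →
      K =ᵐ[ν.prod ν] (fun q => g₁ q.1 • g₂x q.2) →
      f₁g₁ =ᵐ[ν] (fun t => f₁ t * g₁ t) →
      f₂g₂ =ᵐ[ν] (fun t => f₂ t * g₂ t) →
      c =ᵐ[ν] (fun t => ∫ s, f₁g₁ s * f₂g₂ (s⁻¹ * t) ∂ν) →
      ∫ q, f₁ q.1 * f₂ q.2 * φ (W13 (W23 K) q) ∂(ν.prod ν) = φ (π c x)) := by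
  subst hW13
  have key := integral_mul_swap_W23_swap_W23 (π := π) hW hW23 hχ
  constructor
  · intro hmul f₁ f₂ g₁ g₂ x φ g₂x K f₁g₁ f₂g₂ c hg₂x hK hf₁g₁ hf₂g₂ hc
    rw [hmul f₁g₁ f₂g₂ c hc]
    exact key f₁ f₂ g₁ g₂ x φ hg₂x hK hf₁g₁ hf₂g₂
  · intro hcorep a b ab hab
    obtain ⟨f₁, g₁, ha⟩ := Lp.exists_mul_ae_eq_of_L1 a
    obtain ⟨f₂, g₂, hb⟩ := Lp.exists_mul_ae_eq_of_L1 b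
    ext x
    refine (SeparatingDual.eq_iff_forall_dual_eq (R := ℂ)).2 fun φ => ?_
    have hg₂x := Lp.coeFn_toSpanSingleton_compLp g₂ x
    have hK := L2.coeFn_smulProd g₁ ((ContinuousLinearMap.toSpanSingleton ℂ x).compLp g₂)
    rw [← hcorep f₁ f₂ g₁ g₂ x φ _ _ a b ab hg₂x hK ha.symm hb.symm hab]
    exact key f₁ f₂ g₁ g₂ x φ hg₂x hK ha.symm hb.symm

/-- Let `G` be a second-countable locally compact group with left Haar measure `ν`, `E` a
reflexive complex Banach space, and `π : L¹(G) → B(E)` a bounded linear map, with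
associated operator `W` on `L²(G, E)`, leg-numbered operators `W₂₃`, `W₁₃ = χ W₂₃ χ` on
`L²(G×G, E)` (`χ` the coordinate swap).  Then `π` is multiplicative for convolution if
and only if `(Δ ⊗ id)W = W₁₃ W₂₃`, i.e. for all `f₁, f₂, g₁, g₂ ∈ L²(G)`, `x ∈ E`,
`φ ∈ E*`:
`∫ f₁(s) f₂(t) φ((W₁₃ W₂₃ (g₁ ⊠ (g₂ • x)))(s,t)) = φ(π((f₁g₁) ⋆ (f₂g₂)) x)`. -/
theorem pi_homomorphism_iff_corepresentation
    {G : Type*} [Group G] [TopologicalSpace G] [IsTopologicalGroup G]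
    [LocallyCompactSpace G] [SecondCountableTopology G]
    [MeasurableSpace G] [BorelSpace G]
    (ν : Measure G) [ν.IsHaarMeasure]
    {E : Type*} [NormedAddCommGroup E] [NormedSpace ℂ E] [CompleteSpace E]
    (hrefl : Function.Surjective (NormedSpace.inclusionInDoubleDual ℂ E))
    (π : Lp ℂ 1 ν →L[ℂ] (E →L[ℂ] E))
    (W : Lp E 2 ν →L[ℂ] Lp E 2 ν)
    (hW : ∀ (f g : Lp ℂ 2 ν) (x : E) (φ : StrongDual ℂ E)
        (gx : Lp E 2 ν) (fg : Lp ℂ 1 ν),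
      gx =ᵐ[ν] (fun t => g t • x) → fg =ᵐ[ν] (fun t => f t * g t) →
      ∫ t, f t * φ (W gx t) ∂ν = φ (π fg x))
    (W23 : Lp E 2 (ν.prod ν) →L[ℂ] Lp E 2 (ν.prod ν))
    (hW23 : ∀ (g : Lp ℂ 2 ν) (H : Lp E 2 ν) (K K' : Lp E 2 (ν.prod ν)),
      K =ᵐ[ν.prod ν] (fun q => g q.1 • H q.2) →
      K' =ᵐ[ν.prod ν] (fun q => g q.1 • (W H) q.2) →
      W23 K = K')
    (χ : Lp E 2 (ν.prod ν) →L[ℂ] Lp E 2 (ν.prod ν))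
    (hχ : ∀ H : Lp E 2 (ν.prod ν), χ H =ᵐ[ν.prod ν] (fun q => H (q.2, q.1)))
    (W13 : Lp E 2 (ν.prod ν) →L[ℂ] Lp E 2 (ν.prod ν))
    (hW13 : W13 = χ.comp (W23.comp χ)) :
    (∀ a b ab : Lp ℂ 1 ν,
        ab =ᵐ[ν] (fun t => ∫ s, a s * b (s⁻¹ * t) ∂ν) →
        π ab = (π a).comp (π b)) ↔
    (∀ (f₁ f₂ g₁ g₂ : Lp ℂ 2 ν) (x : E) (φ : StrongDual ℂ E)
        (g₂x : Lp E 2 ν) (K : Lp E 2 (ν.prod ν)) (f₁g₁ f₂g₂ c : Lp ℂ 1 ν),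
      g₂x =ᵐ[ν] (fun t => g₂ t • x) →
      K =ᵐ[ν.prod ν] (fun q => g₁ q.1 • g₂x q.2) →
      f₁g₁ =ᵐ[ν] (fun t => f₁ t * g₁ t) →
      f₂g₂ =ᵐ[ν] (fun t => f₂ t * g₂ t) →
      c =ᵐ[ν] (fun t => ∫ s, f₁g₁ s * f₂g₂ (s⁻¹ * t) ∂ν) →
      ∫ q, f₁ q.1 * f₂ q.2 * φ (W13 (W23 K) q) ∂(ν.prod ν) = φ (π c x)) :=
  pi_homomorphism_iff_corepresentation_general ν π W hW W23 hW23 χ hχ W13 hW13
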